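/- Let W_λ be a unilateral weighted shift in ℓ²(ℕ) that is C-symmetric with respect to a conjugation C. Then W_λ is C-selfadjoint if and only if C eₙ ∈ dom(W_λ) for every n ∈ ℕ, where (eₙ) is the canonical orthonormal basis. -/

import Mathlib

open InnerProductSpace in
/-- A conjugation on a complex inner product space: an antilinear involution
satisfying `⟪Cf, Cg⟫ = ⟪g, f⟫`. -/
structure Conjugation (H : Type*) [NormedAddCommGroup H] [InnerProductSpace ℂ H] where
  toFun : H → H
  map_add' : ∀ x y, toFun (x + y) = toFun x + toFun y
  map_smul' : ∀ (c : ℂ) (x : H), toFun (c • x) = (starRingEnd ℂ c) • toFun x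
  invol : ∀ x, toFun (toFun x) = x
  inner_map : ∀ x y, (inner ℂ (toFun x) (toFun y) : ℂ) = inner ℂ y x

/-- `T` is `C`-symmetric: `T ⊆ C T* C`. -/
noncomputable def CSymmetric {H : Type*} [NormedAddCommGroup H] [InnerProductSpace ℂ H]
    [CompleteSpace H] (C : Conjugation H) (T : H →ₗ.[ℂ] H) : Prop :=
  ∀ x : T.domain, ∃ hx : C.toFun x ∈ T.adjoint.domain,
    C.toFun (T.adjoint ⟨C.toFun x, hx⟩) = T x

/-- `T` is `C`-selfadjoint: `T = C T* C`. -/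
noncomputable def CSelfAdjoint {H : Type*} [NormedAddCommGroup H] [InnerProductSpace ℂ H]
    [CompleteSpace H] (C : Conjugation H) (T : H →ₗ.[ℂ] H) : Prop :=
  CSymmetric C T ∧ ∀ y : H, C.toFun y ∈ T.adjoint.domain → y ∈ T.domain

/-- Composition of partially defined linear maps, with its natural (maximal) domain. -/
noncomputable def LinearPMap.pcomp {R E F G : Type*} [Ring R] [AddCommGroup E] [Module R E]
    [AddCommGroup F] [Module R F] [AddCommGroup G] [Module R G]
    (g : F →ₗ.[R] G) (f : E →ₗ.[R] F) : E →ₗ.[R] G :=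
  g.comp (f.domRestrict ((g.domain.comap f.toFun).map f.domain.subtype))
    (by
      rintro ⟨x, hx⟩
      obtain ⟨y, hy, hyx⟩ := (Submodule.mem_inf.mp hx).1
      have h : f.domRestrict ((g.domain.comap f.toFun).map f.domain.subtype) ⟨x, hx⟩ = f y :=
        LinearPMap.domRestrict_apply (by exact hyx.symm)
      rw [h]
      exact hy)

/-- Natural powers of a partially defined linear map, `T^(n+1) = T ∘ T^n`, with
`T^0` the identity on the whole space. -/
noncomputable def LinearPMap.ppow {R E : Type*} [Ring R] [AddCommGroup E] [Module R E]
    (T : E →ₗ.[R] E) : ℕ → E →ₗ.[R] E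
  | 0 => ⟨⊤, (⊤ : Submodule R E).subtype⟩
  | n + 1 => T.pcomp (T.ppow n)

/-- `W` is the unilateral weighted shift in `ℓ²(ℕ)` with weights `lam` (0-indexed:
`W eₙ = lam n • e_{n+1}`): it has the maximal domain
`{f : Σ |lam n * f n|² < ∞}` and acts by `(W f)(n+1) = lam n * f n`, `(W f)(0) = 0`. -/
def IsWeightedShift (lam : ℕ → ℂ) (W : lp (fun _ : ℕ => ℂ) 2 →ₗ.[ℂ] lp (fun _ : ℕ => ℂ) 2) :
    Prop :=
  (∀ f : lp (fun _ : ℕ => ℂ) 2, f ∈ W.domain ↔ Memℓp (fun n => lam n * f n) 2) ∧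
  (∀ f : W.domain, (W f : lp (fun _ : ℕ => ℂ) 2) 0 = 0 ∧
    ∀ n : ℕ, (W f : lp (fun _ : ℕ => ℂ) 2) (n + 1) = lam n * (f : lp (fun _ : ℕ => ℂ) 2) n)

/-- The canonical orthonormal basis of `ℓ²(ℕ)` (0-indexed). -/
noncomputable def e (n : ℕ) : lp (fun _ : ℕ => ℂ) 2 := lp.single 2 n 1

/-!
Every `eₙ` lies in `dom W*`, with `W* e_{n+1} = conj λₙ • eₙ`. So if `W` is `C`-selfadjoint,
i.e. `dom W = C (dom W*)`, then every `C eₙ` lies in `dom W`. Conversely, if all `C eₙ` lie in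
`dom W`, then `C`-symmetry gives `W C e_{n+1} = C W* e_{n+1} = λₙ C eₙ`, so for `C y ∈ dom W*`,
`λₙ yₙ = ⟪C y, W C e_{n+1}⟫ = ⟪W* C y, C e_{n+1}⟫ = (C W* C y)_{n+1}`.
Thus `(λₙ yₙ)` is a shifted `ℓ²` sequence, and `y ∈ dom W`.
-/

open scoped ComplexConjugate

section Conjugation

variable {H : Type*} [NormedAddCommGroup H] [InnerProductSpace ℂ H] [CompleteSpace H]
  {C : Conjugation H} {T : H →ₗ.[ℂ] H}

theorem CSymmetric.apply_conj (hsym : CSymmetric C T) {z : H} (hz : z ∈ T.adjoint.domain)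
    (hCz : C.toFun z ∈ T.domain) :
    T ⟨C.toFun z, hCz⟩ = C.toFun (T.adjoint ⟨z, hz⟩) := by
  obtain ⟨_, hval⟩ := hsym ⟨C.toFun z, hCz⟩
  rw [← hval]
  congr 3
  exact C.invol z

theorem inner_conj_apply_eq_inner_conj_adjoint (hT : Dense (T.domain : Set H)) {y : H}
    (hy : C.toFun y ∈ T.adjoint.domain) (x : T.domain) :
    (inner ℂ (C.toFun y) (T x) : ℂ) = inner ℂ (C.toFun x) (C.toFun (T.adjoint ⟨C.toFun y, hy⟩)) :=
  calc (inner ℂ (C.toFun y) (T x) : ℂ)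
      = inner ℂ (T.adjoint ⟨C.toFun y, hy⟩) (x : H) :=
        (LinearPMap.adjoint_isFormalAdjoint hT ⟨C.toFun y, hy⟩ x).symm
    _ = inner ℂ (C.toFun x) (C.toFun (T.adjoint ⟨C.toFun y, hy⟩)) := (C.inner_map _ _).symm

end Conjugation

local notation "ℓ²" => lp (fun _ : ℕ => ℂ) 2

theorem inner_e_left (n : ℕ) (f : ℓ²) : (inner ℂ (e n) f : ℂ) = f n := by
  rw [e, lp.inner_single_left]
  simp [RCLike.inner_apply]

namespace IsWeightedShift

variable {lam : ℕ → ℂ} {W : ℓ² →ₗ.[ℂ] ℓ²}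

theorem single_mem_domain (hW : IsWeightedShift lam W) (n : ℕ) (a : ℂ) :
    (lp.single 2 n a : ℓ²) ∈ W.domain := by
  rw [hW.1]
  have h : (fun m => lam m * (lp.single 2 n a : ℓ²) m) = ⇑(lp.single 2 n (lam n * a) : ℓ²) := by
    funext m
    rcases eq_or_ne m n with rfl | hmn <;> simp [*]
  rw [h]
  exact lp.memℓp _

theorem dense_domain (hW : IsWeightedShift lam W) : Dense (W.domain : Set ℓ²) := fun f =>
  mem_closure_of_tendsto (lp.hasSum_single ENNReal.ofNat_ne_top f)
    (Filter.Eventually.of_forall fun _ =>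
      Submodule.sum_mem _ fun i _ => hW.single_mem_domain i (f i))

theorem mem_domain_of_apply_eq_succ (hW : IsWeightedShift lam W) {y g : ℓ²}
    (hyg : ∀ n, lam n * y n = g (n + 1)) : y ∈ W.domain := by
  rw [hW.1, show (fun n => lam n * y n) = fun n => g (n + 1) from funext hyg]
  exact memℓp_gen (((memℓp_gen_iff (by norm_num)).1 (lp.memℓp g)).comp_injective
    Nat.succ_injective)

theorem inner_e_zero_apply (hW : IsWeightedShift lam W) (x : W.domain) :
    (inner ℂ (e 0) (W x) : ℂ) = 0 := by
  rw [inner_e_left, (hW.2 x).1]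

theorem inner_e_succ_apply (hW : IsWeightedShift lam W) (n : ℕ) (x : W.domain) :
    (inner ℂ (e (n + 1)) (W x) : ℂ) = lam n * (x : ℓ²) n := by
  rw [inner_e_left, (hW.2 x).2 n]

theorem e_mem_adjoint_domain (hW : IsWeightedShift lam W) (m : ℕ) :
    e m ∈ W.adjoint.domain := by
  apply LinearPMap.mem_adjoint_domain_of_exists
  rcases m with _ | n
  · exact ⟨0, fun x => by rw [inner_zero_left, hW.inner_e_zero_apply]⟩
  · refine ⟨conj (lam n) • e n, fun x => ?_⟩
    rw [inner_smul_left, RCLike.conj_conj, inner_e_left, hW.inner_e_succ_apply]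

theorem adjoint_apply_e_succ (hW : IsWeightedShift lam W) (n : ℕ) :
    W.adjoint ⟨e (n + 1), hW.e_mem_adjoint_domain (n + 1)⟩ = conj (lam n) • e n := by
  refine LinearPMap.adjoint_apply_eq hW.dense_domain _ fun x => ?_
  rw [inner_smul_left, RCLike.conj_conj, inner_e_left, hW.inner_e_succ_apply]

variable {C : Conjugation ℓ²}

theorem apply_conj_e_succ (hW : IsWeightedShift lam W) (hsym : CSymmetric C W) (n : ℕ)
    (h : C.toFun (e (n + 1)) ∈ W.domain) :
    W ⟨C.toFun (e (n + 1)), h⟩ = lam n • C.toFun (e n) := by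
  rw [hsym.apply_conj (hW.e_mem_adjoint_domain (n + 1)), hW.adjoint_apply_e_succ, C.map_smul',
    RCLike.conj_conj]

theorem lam_mul_apply_eq_conj_adjoint (hW : IsWeightedShift lam W) (hsym : CSymmetric C W)
    (hdom : ∀ n, C.toFun (e n) ∈ W.domain) {y : ℓ²} (hy : C.toFun y ∈ W.adjoint.domain)
    (n : ℕ) : lam n * y n = C.toFun (W.adjoint ⟨C.toFun y, hy⟩) (n + 1) :=
  calc lam n * y n = lam n * inner ℂ (C.toFun y) (C.toFun (e n)) := by
        rw [C.inner_map, inner_e_left]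
    _ = inner ℂ (C.toFun y) (W ⟨C.toFun (e (n + 1)), hdom (n + 1)⟩) := by
        rw [hW.apply_conj_e_succ hsym, inner_smul_right]
    _ = C.toFun (W.adjoint ⟨C.toFun y, hy⟩) (n + 1) := by
        rw [inner_conj_apply_eq_inner_conj_adjoint hW.dense_domain, C.invol, inner_e_left]

end IsWeightedShift

/-- a `C`-symmetric unilateral weighted shift `W_λ` is `C`-selfadjoint
iff `C eₙ ∈ dom W_λ` for every `n`. -/
theorem stmt_12 (lam : ℕ → ℂ)
    (W : lp (fun _ : ℕ => ℂ) 2 →ₗ.[ℂ] lp (fun _ : ℕ => ℂ) 2)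
    (hW : IsWeightedShift lam W)
    (C : Conjugation (lp (fun _ : ℕ => ℂ) 2)) (hsym : CSymmetric C W) :
    CSelfAdjoint C W ↔ ∀ n : ℕ, C.toFun (e n) ∈ W.domain := by
  refine ⟨fun hself n => hself.2 _ ?_, fun hdom => ⟨hsym, fun y hy => ?_⟩⟩
  · rw [C.invol]
    exact hW.e_mem_adjoint_domain n
  · exact hW.mem_domain_of_apply_eq_succ (hW.lam_mul_apply_eq_conj_adjoint hsym hdom hy)
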